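/- arXiv:math/0406260 — 2 statements merged into one kernel-verified Lean document; each statement's English description precedes it below -/
import Mathlib

section
/- Let N ≥ 1, let D ⊆ ℕᴺ be a finite nonempty set, let L, L₀ : ℝᴺ → ℝ be linear forms, and let τ be a linear (total) order on ℕᴺ. For a linear form Λ : ℝᴺ → ℝ, let ≺_Λ denote the total order on ℕᴺ defined by: m ≺_Λ m′ if and only if Λ(m) < Λ(m′), or Λ(m) = Λ(m′) and m is τ-smaller than m′. Let e ∈ D and assume that for every real ε with 0 < ε ≤ 1, e is the greatest element of D for the order ≺_{(1−ε)L+εL₀}. Set D^L = {m ∈ D : L(m) = max_{m′∈D} L(m′)}. Then e ∈ D^L, and e is the greatest element of D^L for the order ≺_{L₀}. -/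
/-- The canonical embedding of `ℕᴺ` into `ℝᴺ`. -/
def natCast (N : ℕ) (m : Fin N → ℕ) : Fin N → ℝ := fun i => (m i : ℝ)

/-- For a linear form `Λ : ℝᴺ → ℝ` and a (tie-breaking) linear order `τ` on `ℕᴺ`, the
strict order `≺_Λ` on `ℕᴺ`: compare `Λ` first and break ties with `τ`. -/
def precLt (N : ℕ) (τ : LinearOrder (Fin N → ℕ)) (Λ : (Fin N → ℝ) →ₗ[ℝ] ℝ)
    (m m' : Fin N → ℕ) : Prop :=
  Λ (natCast N m) < Λ (natCast N m') ∨
    (Λ (natCast N m) = Λ (natCast N m') ∧ τ.lt m m')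

/-!
Letting `ε → 0` in `(1 - ε) L + ε L₀` turns the inequalities `m ≼ e` into `L(m) ≤ L(e)`,
while `ε = 1` is already the order `≺_{L₀}` itself.
-/

open Filter Topology

theorem precLt.apply_le {N : ℕ} {τ : LinearOrder (Fin N → ℕ)} {Λ : (Fin N → ℝ) →ₗ[ℝ] ℝ}
    {m m' : Fin N → ℕ} (h : precLt N τ Λ m m') : Λ (natCast N m) ≤ Λ (natCast N m') :=
  h.elim le_of_lt fun h => h.1.le

section Perturbation

variable {E : Type*} [AddCommGroup E] [Module ℝ E] (L L₀ : E →ₗ[ℝ] ℝ)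

theorem LinearMap.tendsto_perturbed_apply (x : E) :
    Tendsto (fun ε : ℝ => ((1 - ε) • L + ε • L₀) x) (𝓝 0) (𝓝 (L x)) := by
  have hcont : Continuous fun ε : ℝ => (1 - ε) * L x + ε * L₀ x := by fun_prop
  simpa using hcont.tendsto 0

theorem LinearMap.le_of_forall_perturbed_le {x y : E}
    (h : ∀ ε : ℝ, 0 < ε → ε ≤ 1 → ((1 - ε) • L + ε • L₀) y ≤ ((1 - ε) • L + ε • L₀) x) :
    L y ≤ L x := by
  refine le_of_tendsto_of_tendsto (b := 𝓝[>] 0)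
    ((L.tendsto_perturbed_apply L₀ y).mono_left nhdsWithin_le_nhds)
    ((L.tendsto_perturbed_apply L₀ x).mono_left nhdsWithin_le_nhds) ?_
  filter_upwards [Ioc_mem_nhdsGT zero_lt_one] with ε hε using h ε hε.1 hε.2

end Perturbation

theorem greatest_of_perturbed_greatest_general (N : ℕ)
    (D : Finset (Fin N → ℕ))
    (L L₀ : (Fin N → ℝ) →ₗ[ℝ] ℝ) (τ : LinearOrder (Fin N → ℕ))
    (e : Fin N → ℕ)
    (hmax : ∀ ε : ℝ, 0 < ε → ε ≤ 1 → ∀ m ∈ D, m ≠ e →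
      precLt N τ ((1 - ε) • L + ε • L₀) m e) :
    (∀ m' ∈ D, L (natCast N m') ≤ L (natCast N e)) ∧
    (∀ m ∈ D, (∀ m' ∈ D, L (natCast N m') ≤ L (natCast N m)) → m ≠ e →
      precLt N τ L₀ m e) := by
  refine ⟨fun m hm => ?_, fun m hm _ hme => ?_⟩
  · by_cases hme : m = e
    · exact hme ▸ le_rfl
    · exact L.le_of_forall_perturbed_le L₀ fun ε hε0 hε1 => (hmax ε hε0 hε1 m hm hme).apply_le
  · simpa using hmax 1 one_pos le_rfl m hm hme

/-- the combinatorial content of the Proposition of Section 2.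
If `e ∈ D` is the greatest element of the finite set `D ⊆ ℕᴺ` for the order
`≺_{(1-ε)L + εL₀}` for every `0 < ε ≤ 1`, then `e` belongs to
`D^L = {m ∈ D : L(m) = max_{m'∈D} L(m')}` and `e` is the greatest element of `D^L`
for the order `≺_{L₀}`. -/
theorem greatest_of_perturbed_greatest (N : ℕ) (hN : 1 ≤ N)
    (D : Finset (Fin N → ℕ)) (hD : D.Nonempty)
    (L L₀ : (Fin N → ℝ) →ₗ[ℝ] ℝ) (τ : LinearOrder (Fin N → ℕ))
    (e : Fin N → ℕ) (he : e ∈ D)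
    (hmax : ∀ ε : ℝ, 0 < ε → ε ≤ 1 → ∀ m ∈ D, m ≠ e →
      precLt N τ ((1 - ε) • L + ε • L₀) m e) :
    (∀ m' ∈ D, L (natCast N m') ≤ L (natCast N e)) ∧
    (∀ m ∈ D, (∀ m' ∈ D, L (natCast N m') ≤ L (natCast N m)) → m ≠ e →
      precLt N τ L₀ m e) :=
  greatest_of_perturbed_greatest_general N D L L₀ τ e hmax
end

section
/- Let k be a field, N ≥ 1, and let I be a nonzero ideal of the polynomial ring k[x₁,…,x_N]. Let ≺₁ and ≺₂ be two monomial orders on ℕᴺ. For a monomial order ≺ and a nonzero polynomial f, write exp_≺(f) ∈ ℕᴺ for the ≺-greatest element of the support of f, and set Exp_≺(I) = { exp_≺(f) : f ∈ I, f ≠ 0 }. Let G = {g₁,…,g_r} ⊆ I ∖ {0} be the minimal reduced Gröbner (standard) basis of I with respect to ≺₁, that is: each g_j has ≺₁-leading coefficient 1; Exp_{≺₁}(I) = ⋃_{j=1}^{r} ( exp_{≺₁}(g_j) + ℕᴺ ); for i ≠ j, exp_{≺₁}(g_j) ∉ exp_{≺₁}(g_i) + ℕᴺ (minimality); and every element of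 the support of g_j other than exp_{≺₁}(g_j) lies outside Exp_{≺₁}(I) (reducedness). Assume that exp_{≺₁}(g_j) = exp_{≺₂}(g_j) for every j = 1, …, r. Then G is also the minimal reduced Gröbner basis of I with respect to ≺₂; in particular Exp_{≺₂}(I) = ⋃_{j=1}^{r} ( exp_{≺₂}(g_j) + ℕᴺ ). -/
/-- A monomial order on `ℕᴺ` (monomials indexed by exponent vectors `Fin N →₀ ℕ`):
a linear order compatible with addition for which `0` is the smallest element. -/
structure MonOrder (N : ℕ) where
  lin : LinearOrder (Fin N →₀ ℕ)
  add_le_add_right : ∀ a b c : Fin N →₀ ℕ, lin.le a b → lin.le (a + c) (b + c)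
  zero_le : ∀ a : Fin N →₀ ℕ, lin.le 0 a

/-- `e` is the `ord`-leading exponent of the polynomial `f`: it belongs to the support
of `f` and is the `ord`-greatest element of the support. -/
def IsExp {k : Type*} [Field k] {N : ℕ} (ord : MonOrder N)
    (f : MvPolynomial (Fin N) k) (e : Fin N →₀ ℕ) : Prop :=
  e ∈ f.support ∧ ∀ m ∈ f.support, ord.lin.le m e

/-- `Exp_ord(I)`: the set of `ord`-leading exponents of the nonzero elements of `I`. -/
def ExpSet {k : Type*} [Field k] {N : ℕ} (ord : MonOrder N)
    (I : Ideal (MvPolynomial (Fin N) k)) : Set (Fin N →₀ ℕ) :=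
  {e | ∃ f ∈ I, f ≠ 0 ∧ IsExp ord f e}

/-! Divide `f ∈ I` by the `g j` with respect to `≺₂`. As the `≺₂`-leading exponents of the `g j`
are the `e j`, no monomial of the remainder lies in `⋃ j, (e j + ℕᴺ) = Exp_{≺₁}(I)`; being in `I`,
the remainder vanishes, since otherwise its `≺₁`-leading exponent would be such a monomial. Hence
`f = ∑ q j * g j` with every `exp_{≺₂}(q j * g j) ≼₂ exp_{≺₂}(f)`, so `exp_{≺₂}(f)` is one of the
`e j + exp_{≺₂}(q j)`. The other three properties of the basis only involve `Exp(I)`. -/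

open MvPolynomial

namespace MonomialOrder

variable {σ : Type*} (m : MonomialOrder σ)

theorem ne_zero_and_degree_eq_iff {R : Type*} [CommSemiring R] {f : MvPolynomial σ R}
    {e : σ →₀ ℕ} : f ≠ 0 ∧ m.degree f = e ↔ e ∈ f.support ∧ ∀ c ∈ f.support, c ≼[m] e := by
  constructor
  · rintro ⟨hf, rfl⟩
    exact ⟨m.degree_mem_support hf, fun c hc => m.le_degree hc⟩
  · rintro ⟨he, hmax⟩
    have hf : f ≠ 0 := support_nonempty.mp ⟨e, he⟩
    exact ⟨hf, m.toSyn.injective <|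
      le_antisymm (hmax _ (m.degree_mem_support hf)) (m.le_degree he)⟩

theorem exists_degree_eq_of_eq_sum {R ι : Type*} [CommSemiring R] {s : Finset ι}
    {p : ι → MvPolynomial σ R} {f : MvPolynomial σ R} (hf : f ≠ 0) (hfp : f = ∑ i ∈ s, p i)
    (hp : ∀ i ∈ s, m.degree (p i) ≼[m] m.degree f) :
    ∃ i ∈ s, p i ≠ 0 ∧ m.degree (p i) = m.degree f := by
  classical
  have hmem : m.degree f ∈ (∑ i ∈ s, p i).support := hfp ▸ m.degree_mem_support hf
  obtain ⟨i, hi, hfi⟩ := Finset.mem_biUnion.mp (support_sum hmem)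
  exact ⟨i, hi, support_nonempty.mp ⟨_, hfi⟩,
    m.toSyn.injective (le_antisymm (hp i hi) (m.le_degree hfi))⟩

theorem exists_degree_le_degree_of_mem {R ι : Type*} [CommRing R] {I : Ideal (MvPolynomial σ R)}
    {b : ι → MvPolynomial σ R} (hbI : ∀ i, b i ∈ I) (hb : ∀ i, IsUnit (m.leadingCoeff (b i)))
    (hI : ∀ r ∈ I, r ≠ 0 → ∃ c ∈ r.support, ∃ i, m.degree (b i) ≤ c)
    {f : MvPolynomial σ R} (hfI : f ∈ I) (hf : f ≠ 0) :
    ∃ i, m.degree (b i) ≤ m.degree f := by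
  obtain ⟨q, r, hfqr, hdeg, hr⟩ := m.div hb f
  rw [Finsupp.linearCombination_apply, Finsupp.sum] at hfqr
  have hsum : ∑ i ∈ q.support, q i • b i ∈ I :=
    I.sum_mem fun i _ => I.mul_mem_left _ (hbI i)
  have hr0 : r = 0 := by
    by_contra hr0
    have hrI : r ∈ I := by
      rw [eq_sub_of_add_eq' hfqr.symm]
      exact I.sub_mem hfI hsum
    obtain ⟨c, hc, i, hic⟩ := hI r hrI hr0
    exact hr c hc i hic
  rw [hr0, add_zero] at hfqr
  obtain ⟨i, -, hqi, hi⟩ := m.exists_degree_eq_of_eq_sum hf hfqr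
    fun i _ => by simpa only [smul_eq_mul, mul_comm] using hdeg i
  refine ⟨i, ?_⟩
  rw [← hi, smul_eq_mul, mul_comm, m.degree_mul_of_isRegular_left (hb i).isRegular
    (left_ne_zero_of_mul hqi)]
  exact le_self_add

end MonomialOrder

noncomputable section

namespace MonOrder

variable {N : ℕ} (ord : MonOrder N)

def Syn (_ : MonOrder N) : Type := Fin N →₀ ℕ

instance : AddCommMonoid ord.Syn := inferInstanceAs (AddCommMonoid (Fin N →₀ ℕ))

instance : LinearOrder ord.Syn := ord.lin

instance : IsOrderedAddMonoid ord.Syn where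
  add_le_add_left a b h c := ord.add_le_add_right a b c h

theorem lin_le_of_le {a b : Fin N →₀ ℕ} (h : a ≤ b) : ord.lin.le a b := by
  obtain ⟨d, rfl⟩ := le_iff_exists_add.mp h
  simpa only [zero_add, add_comm d] using ord.add_le_add_right 0 d a (ord.zero_le d)

-- Dickson's lemma: a linear order refining the divisibility order of `ℕᴺ` is a well-order.
instance : WellFoundedLT ord.Syn :=
  have hmono : @Monotone (Fin N →₀ ℕ) ord.Syn _ _ id := fun _ _ => ord.lin_le_of_le
  (hmono.wellQuasiOrderedLE_of_wellQuasiOrderedLE_of_surjective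
    Function.surjective_id).to_wellFoundedLT

def toMonomialOrder : MonomialOrder (Fin N) where
  syn := ord.Syn
  toSyn := AddEquiv.refl _
  toSyn_monotone _ _ := ord.lin_le_of_le

end MonOrder

end

section ExpSet

variable {k : Type*} [Field k] {N : ℕ} (ord : MonOrder N)

theorem isExp_iff {f : MvPolynomial (Fin N) k} {e : Fin N →₀ ℕ} :
    IsExp ord f e ↔ f ≠ 0 ∧ ord.toMonomialOrder.degree f = e :=
  ord.toMonomialOrder.ne_zero_and_degree_eq_iff.symm

theorem mem_expSet_iff {I : Ideal (MvPolynomial (Fin N) k)} {e : Fin N →₀ ℕ} :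
    e ∈ ExpSet ord I ↔ ∃ f ∈ I, f ≠ 0 ∧ ord.toMonomialOrder.degree f = e := by
  simp only [ExpSet, Set.mem_ofPred_eq, isExp_iff, and_self_left]

theorem add_mem_expSet {I : Ideal (MvPolynomial (Fin N) k)} {e : Fin N →₀ ℕ}
    (he : e ∈ ExpSet ord I) (d : Fin N →₀ ℕ) : e + d ∈ ExpSet ord I := by
  classical
  obtain ⟨f, hfI, hf, rfl⟩ := (mem_expSet_iff ord).mp he
  have hd : (monomial d (1 : k)) ≠ 0 := by simp
  refine (mem_expSet_iff ord).mpr ⟨monomial d 1 * f, I.mul_mem_left _ hfI, mul_ne_zero hd hf, ?_⟩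
  rw [MonomialOrder.degree_mul hd hf, MonomialOrder.degree_monomial, if_neg one_ne_zero, add_comm]

end ExpSet

theorem minimal_reduced_groebner_basis_of_eq_exponents_general
    {k : Type*} [Field k] (N : ℕ)
    (I : Ideal (MvPolynomial (Fin N) k))
    (ord₁ ord₂ : MonOrder N) (r : ℕ)
    (g : Fin r → MvPolynomial (Fin N) k) (e : Fin r → (Fin N →₀ ℕ))
    (hgI : ∀ j, g j ∈ I)
    (hlc : ∀ j, MvPolynomial.coeff (e j) (g j) = 1)
    (hgen : ExpSet ord₁ I = ⋃ j, {m | ∃ d, m = e j + d})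
    (hmin : ∀ i j, i ≠ j → ¬ ∃ d, e j = e i + d)
    (hred : ∀ j, ∀ m ∈ (g j).support, m ≠ e j → m ∉ ExpSet ord₁ I)
    (hexp2 : ∀ j, IsExp ord₂ (g j) (e j)) :
    (∀ j, MvPolynomial.coeff (e j) (g j) = 1) ∧
    (ExpSet ord₂ I = ⋃ j, {m | ∃ d, m = e j + d}) ∧
    (∀ i j, i ≠ j → ¬ ∃ d, e j = e i + d) ∧
    (∀ j, ∀ m ∈ (g j).support, m ≠ e j → m ∉ ExpSet ord₂ I) := by
  set m₂ := ord₂.toMonomialOrder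
  have hdeg₂ (j : Fin r) : m₂.degree (g j) = e j := ((isExp_iff ord₂).mp (hexp2 j)).2
  have hunit (j : Fin r) : IsUnit (m₂.leadingCoeff (g j)) := by
    rw [MonomialOrder.leadingCoeff, hdeg₂, hlc]
    exact isUnit_one
  have hdiv : ∀ p ∈ I, p ≠ 0 → ∃ c ∈ p.support, ∃ j, m₂.degree (g j) ≤ c := by
    intro p hpI hp
    have hmem := (mem_expSet_iff ord₁).mpr ⟨p, hpI, hp, rfl⟩
    rw [hgen] at hmem
    obtain ⟨j, d, hjd⟩ := Set.mem_iUnion.mp hmem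
    refine ⟨_, ord₁.toMonomialOrder.degree_mem_support hp, j, ?_⟩
    rw [hjd, hdeg₂]
    exact le_self_add
  have hExp₂ : ExpSet ord₂ I = ⋃ j, {m | ∃ d, m = e j + d} := by
    ext a
    simp only [Set.mem_iUnion, Set.mem_ofPred_eq]
    constructor
    · rw [mem_expSet_iff]
      rintro ⟨f, hfI, hf, rfl⟩
      obtain ⟨j, hj⟩ := m₂.exists_degree_le_degree_of_mem hgI hunit hdiv hfI hf
      exact ⟨j, le_iff_exists_add.mp (hdeg₂ j ▸ hj)⟩
    · rintro ⟨j, d, rfl⟩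
      exact add_mem_expSet ord₂ ⟨g j, hgI j, ((isExp_iff ord₂).mp (hexp2 j)).1, hexp2 j⟩ d
  refine ⟨hlc, hExp₂, hmin, fun j m hm hme => ?_⟩
  rw [hExp₂, ← hgen]
  exact hred j m hm hme

/-- commutative polynomial version of Lemma 1 of the paper: if
`g₁, …, g_r` is the minimal reduced Gröbner basis of a nonzero ideal `I` w.r.t. a
monomial order `≺₁`, with leading exponents `e₁, …, e_r`, and if the `≺₂`-leading
exponents of the `g_j` coincide with their `≺₁`-leading exponents, then `g₁, …, g_r`
is also the minimal reduced Gröbner basis of `I` w.r.t. `≺₂`; in particular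
`Exp_{≺₂}(I) = ⋃_j (e_j + ℕᴺ)`. -/
theorem minimal_reduced_groebner_basis_of_eq_exponents
    {k : Type*} [Field k] (N : ℕ) (hN : 1 ≤ N)
    (I : Ideal (MvPolynomial (Fin N) k)) (hI : I ≠ ⊥)
    (ord₁ ord₂ : MonOrder N) (r : ℕ)
    (g : Fin r → MvPolynomial (Fin N) k) (e : Fin r → (Fin N →₀ ℕ))
    (hgI : ∀ j, g j ∈ I) (hg0 : ∀ j, g j ≠ 0)
    (hexp1 : ∀ j, IsExp ord₁ (g j) (e j))
    (hlc : ∀ j, MvPolynomial.coeff (e j) (g j) = 1)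
    (hgen : ExpSet ord₁ I = ⋃ j, {m | ∃ d, m = e j + d})
    (hmin : ∀ i j, i ≠ j → ¬ ∃ d, e j = e i + d)
    (hred : ∀ j, ∀ m ∈ (g j).support, m ≠ e j → m ∉ ExpSet ord₁ I)
    (hexp2 : ∀ j, IsExp ord₂ (g j) (e j)) :
    (∀ j, MvPolynomial.coeff (e j) (g j) = 1) ∧
    (ExpSet ord₂ I = ⋃ j, {m | ∃ d, m = e j + d}) ∧
    (∀ i j, i ≠ j → ¬ ∃ d, e j = e i + d) ∧
    (∀ j, ∀ m ∈ (g j).support, m ≠ e j → m ∉ ExpSet ord₂ I) :=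
  minimal_reduced_groebner_basis_of_eq_exponents_general N I ord₁ ord₂ r g e hgI hlc hgen hmin hred
    hexp2
end
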